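/- arXiv:1911.06390 — 6 statements merged into one kernel-verified Lean document; each statement's English description precedes it below -/
import Mathlib

section
/- Let (𝔩 → 𝔥 → 𝔤, ▷, {−,−}) be a 2-crossed module of Lie algebras. Set L₋₂ := 𝔩, L₋₁ := 𝔥, L₀ := 𝔤 (as the Lie algebra 𝔤), μ₁ := t in both degrees, μ₂(a₁,a₂) := [a₁,a₂], μ₂(a,b) := a ▷ b for b ∈ 𝔥, μ₂(a,c) := a ▷ c for c ∈ 𝔩, and μ₂(b₁,b₂) := −{b₁,b₂} − {b₂,b₁} for b₁,b₂ ∈ 𝔥. Then this data is a strict 3-term L∞-algebra; in particular the derived identities hold: μ₁(μ₂(b₁,b₂)) = μ₂(μ₁(b₁),b₂) + μ₂(μ₁(b₂),b₁), i.e. t(−{b₁,b₂} − {b₂,b₁}) = t(b₁) ▷ b₂ + t(b₂) ▷ b₁, and μ₂(μ₁(b),c) = μ₂(b,μ₁(c)), i.e. t(b) ▷ c = −{b,t(c)} − {t(c),b}, together with all the remaining strict 3-term L∞ identities. -/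
/-!
The L∞ identities that are not already axioms of the 2-crossed module are linear consequences
of them. The key one, `t(μ₂(b₁,b₂)) = t(b₁) ▷ b₂ + t(b₂) ▷ b₁`, comes from adding the Peiffer
identity `t{b₁,b₂} = [b₁,b₂] − t(b₁) ▷ b₂` to its swap: the brackets cancel by antisymmetry.
-/

namespace LinearMap

variable {R M N : Type*} [CommRing R] [AddCommGroup M] [Module R M] [AddCommGroup N] [Module R N]

/-- The paper's `μ₂(b₁,b₂) := −{b₁,b₂} − {b₂,b₁}` built from the Peiffer lifting `{−,−} = pf`. -/
def negSymm (pf : M →ₗ[R] M →ₗ[R] N) (x y : M) : N := -pf x y - pf y x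

theorem map_negSymm_of_map_eq_lie_sub {H F : Type*} [LieRing H] [Module R H] [FunLike F N H]
    [AddMonoidHomClass F N H] (t : F) (pf : H →ₗ[R] H →ₗ[R] N) (δ : H → H → H)
    (ht : ∀ x y, t (pf x y) = ⁅x, y⁆ - δ x y) (x y : H) :
    t (pf.negSymm x y) = δ x y + δ y x := by
  rw [negSymm, map_sub, map_neg, ht, ht, ← lie_skew x y]
  abel

variable (pf : M →ₗ[R] M →ₗ[R] N)

theorem negSymm_comm (x y : M) : pf.negSymm x y = pf.negSymm y x := by
  unfold negSymm
  abel

theorem negSymm_eq_of_neg_eq {x y : M} {z : N} (hz : -z = pf y x + pf x y) :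
    z = pf.negSymm x y := by
  rw [negSymm, ← neg_neg z, hz]
  abel

theorem map_negSymm_of_equivariant (D : N →ₗ[R] N) (E : M →ₗ[R] M)
    (hD : ∀ x y, D (pf x y) = pf (E x) y + pf x (E y)) (x y : M) :
    D (pf.negSymm x y) = pf.negSymm (E x) y + pf.negSymm x (E y) := by
  simp only [negSymm, map_sub, map_neg, hD]
  abel

end LinearMap

open LinearMap

theorem two_crossed_module_gives_strict_three_term_Linfty_general
    {l : Type*} [LieRing l] [LieAlgebra ℝ l]
    {h : Type*} [LieRing h] [LieAlgebra ℝ h]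
    {g : Type*} [LieRing g] [LieAlgebra ℝ g]
    (t₁ : l →ₗ⁅ℝ⁆ h) (t₂ : h →ₗ⁅ℝ⁆ g)
    (h_tt : ∀ c : l, t₂ (t₁ c) = 0)
    (actH : g →ₗ[ℝ] h →ₗ[ℝ] h) (actL : g →ₗ[ℝ] l →ₗ[ℝ] l)
    (h_actH : ∀ (a₁ a₂ : g) (b : h),
      actH ⁅a₁, a₂⁆ b = actH a₁ (actH a₂ b) - actH a₂ (actH a₁ b))
    (h_actL : ∀ (a₁ a₂ : g) (c : l),
      actL ⁅a₁, a₂⁆ c = actL a₁ (actL a₂ c) - actL a₂ (actL a₁ c))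
    (h_equivL : ∀ (a : g) (c : l), t₁ (actL a c) = actH a (t₁ c))
    (h_equivH : ∀ (a : g) (b : h), t₂ (actH a b) = ⁅a, t₂ b⁆)
    (pf : h →ₗ[ℝ] h →ₗ[ℝ] l)
    (h_pf_equiv : ∀ (a : g) (b₁ b₂ : h),
      actL a (pf b₁ b₂) = pf (actH a b₁) b₂ + pf b₁ (actH a b₂))
    (h_pf₁ : ∀ b₁ b₂ : h, t₁ (pf b₁ b₂) = ⁅b₁, b₂⁆ - actH (t₂ b₁) b₂)
    (h_pf₅ : ∀ (b : h) (c : l), - actL (t₂ b) c = pf (t₁ c) b + pf b (t₁ c)) :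
    -- μ₁ ∘ μ₁ = 0
    (∀ c : l, t₂ (t₁ c) = 0) ∧
    -- μ₂([a₁,a₂],x) = μ₂(a₁,μ₂(a₂,x)) − μ₂(a₂,μ₂(a₁,x)) for x ∈ L₋₁ and x ∈ L₋₂
    (∀ (a₁ a₂ : g) (b : h),
      actH ⁅a₁, a₂⁆ b = actH a₁ (actH a₂ b) - actH a₂ (actH a₁ b)) ∧
    (∀ (a₁ a₂ : g) (c : l),
      actL ⁅a₁, a₂⁆ c = actL a₁ (actL a₂ c) - actL a₂ (actL a₁ c)) ∧
    -- μ₁(μ₂(a,b)) = [a, μ₁(b)] for b ∈ L₋₁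
    (∀ (a : g) (b : h), t₂ (actH a b) = ⁅a, t₂ b⁆) ∧
    -- μ₁(μ₂(a,c)) = μ₂(a,μ₁(c)) for c ∈ L₋₂
    (∀ (a : g) (c : l), t₁ (actL a c) = actH a (t₁ c)) ∧
    -- the product μ₂ : L₋₁ × L₋₁ → L₋₂, μ₂(b₁,b₂) = −{b₁,b₂} − {b₂,b₁}, is symmetric
    (∀ b₁ b₂ : h, - pf b₁ b₂ - pf b₂ b₁ = - pf b₂ b₁ - pf b₁ b₂) ∧
    -- μ₁(μ₂(b₁,b₂)) = μ₂(μ₁(b₁),b₂) + μ₂(μ₁(b₂),b₁), i.e.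
    -- t(−{b₁,b₂} − {b₂,b₁}) = t(b₁) ▷ b₂ + t(b₂) ▷ b₁
    (∀ b₁ b₂ : h,
      t₁ (- pf b₁ b₂ - pf b₂ b₁) = actH (t₂ b₁) b₂ + actH (t₂ b₂) b₁) ∧
    -- μ₂(μ₁(b),c) = μ₂(b,μ₁(c)), i.e. t(b) ▷ c = −{b,t(c)} − {t(c),b}
    (∀ (b : h) (c : l), actL (t₂ b) c = - pf b (t₁ c) - pf (t₁ c) b) ∧
    -- μ₂(a,μ₂(b₁,b₂)) = μ₂(μ₂(a,b₁),b₂) + μ₂(b₁,μ₂(a,b₂))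
    (∀ (a : g) (b₁ b₂ : h),
      actL a (- pf b₁ b₂ - pf b₂ b₁)
        = (- pf (actH a b₁) b₂ - pf b₂ (actH a b₁))
          + (- pf b₁ (actH a b₂) - pf (actH a b₂) b₁)) :=
  ⟨h_tt, h_actH, h_actL, h_equivH, h_equivL,
    pf.negSymm_comm,
    map_negSymm_of_map_eq_lie_sub t₁ pf (fun x y => actH (t₂ x) y) h_pf₁,
    fun b c => pf.negSymm_eq_of_neg_eq (h_pf₅ b c),
    fun a => pf.map_negSymm_of_equivariant (actL a) (actH a) (h_pf_equiv a)⟩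

/-- A 2-crossed module of Lie algebras `(𝔩 → 𝔥 → 𝔤, ▷, {−,−})` gives rise to a
strict 3-term L∞-algebra, with `μ₁ := t` in both degrees, `μ₂(a,b) := a ▷ b`,
`μ₂(a,c) := a ▷ c` and the symmetric product `μ₂(b₁,b₂) := −{b₁,b₂} − {b₂,b₁}`.
The conclusion lists all the strict 3-term L∞-algebra identities for this data. -/
theorem two_crossed_module_gives_strict_three_term_Linfty
    {l : Type*} [LieRing l] [LieAlgebra ℝ l]
    {h : Type*} [LieRing h] [LieAlgebra ℝ h]
    {g : Type*} [LieRing g] [LieAlgebra ℝ g]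
    (t₁ : l →ₗ⁅ℝ⁆ h) (t₂ : h →ₗ⁅ℝ⁆ g)
    (h_tt : ∀ c : l, t₂ (t₁ c) = 0)
    (actH : g →ₗ[ℝ] h →ₗ[ℝ] h) (actL : g →ₗ[ℝ] l →ₗ[ℝ] l)
    (h_actH : ∀ (a₁ a₂ : g) (b : h),
      actH ⁅a₁, a₂⁆ b = actH a₁ (actH a₂ b) - actH a₂ (actH a₁ b))
    (h_actL : ∀ (a₁ a₂ : g) (c : l),
      actL ⁅a₁, a₂⁆ c = actL a₁ (actL a₂ c) - actL a₂ (actL a₁ c))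
    (h_derH : ∀ (a : g) (b₁ b₂ : h),
      actH a ⁅b₁, b₂⁆ = ⁅actH a b₁, b₂⁆ + ⁅b₁, actH a b₂⁆)
    (h_derL : ∀ (a : g) (c₁ c₂ : l),
      actL a ⁅c₁, c₂⁆ = ⁅actL a c₁, c₂⁆ + ⁅c₁, actL a c₂⁆)
    (h_equivL : ∀ (a : g) (c : l), t₁ (actL a c) = actH a (t₁ c))
    (h_equivH : ∀ (a : g) (b : h), t₂ (actH a b) = ⁅a, t₂ b⁆)
    (pf : h →ₗ[ℝ] h →ₗ[ℝ] l)
    (h_pf_equiv : ∀ (a : g) (b₁ b₂ : h),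
      actL a (pf b₁ b₂) = pf (actH a b₁) b₂ + pf b₁ (actH a b₂))
    (h_pf₁ : ∀ b₁ b₂ : h, t₁ (pf b₁ b₂) = ⁅b₁, b₂⁆ - actH (t₂ b₁) b₂)
    (h_pf₂ : ∀ c₁ c₂ : l, pf (t₁ c₁) (t₁ c₂) = ⁅c₁, c₂⁆)
    (h_pf₃ : ∀ b₁ b₂ b₃ : h,
      pf b₁ ⁅b₂, b₃⁆ = pf (t₁ (pf b₁ b₂)) b₃ - pf (t₁ (pf b₁ b₃)) b₂)
    (h_pf₄ : ∀ b₁ b₂ b₃ : h,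
      pf ⁅b₁, b₂⁆ b₃ = actL (t₂ b₁) (pf b₂ b₃) + pf b₁ ⁅b₂, b₃⁆
        - actL (t₂ b₂) (pf b₁ b₃) - pf b₂ ⁅b₁, b₃⁆)
    (h_pf₅ : ∀ (b : h) (c : l), - actL (t₂ b) c = pf (t₁ c) b + pf b (t₁ c)) :
    -- μ₁ ∘ μ₁ = 0
    (∀ c : l, t₂ (t₁ c) = 0) ∧
    -- μ₂([a₁,a₂],x) = μ₂(a₁,μ₂(a₂,x)) − μ₂(a₂,μ₂(a₁,x)) for x ∈ L₋₁ and x ∈ L₋₂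
    (∀ (a₁ a₂ : g) (b : h),
      actH ⁅a₁, a₂⁆ b = actH a₁ (actH a₂ b) - actH a₂ (actH a₁ b)) ∧
    (∀ (a₁ a₂ : g) (c : l),
      actL ⁅a₁, a₂⁆ c = actL a₁ (actL a₂ c) - actL a₂ (actL a₁ c)) ∧
    -- μ₁(μ₂(a,b)) = [a, μ₁(b)] for b ∈ L₋₁
    (∀ (a : g) (b : h), t₂ (actH a b) = ⁅a, t₂ b⁆) ∧
    -- μ₁(μ₂(a,c)) = μ₂(a,μ₁(c)) for c ∈ L₋₂
    (∀ (a : g) (c : l), t₁ (actL a c) = actH a (t₁ c)) ∧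
    -- the product μ₂ : L₋₁ × L₋₁ → L₋₂, μ₂(b₁,b₂) = −{b₁,b₂} − {b₂,b₁}, is symmetric
    (∀ b₁ b₂ : h, - pf b₁ b₂ - pf b₂ b₁ = - pf b₂ b₁ - pf b₁ b₂) ∧
    -- μ₁(μ₂(b₁,b₂)) = μ₂(μ₁(b₁),b₂) + μ₂(μ₁(b₂),b₁), i.e.
    -- t(−{b₁,b₂} − {b₂,b₁}) = t(b₁) ▷ b₂ + t(b₂) ▷ b₁
    (∀ b₁ b₂ : h,
      t₁ (- pf b₁ b₂ - pf b₂ b₁) = actH (t₂ b₁) b₂ + actH (t₂ b₂) b₁) ∧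
    -- μ₂(μ₁(b),c) = μ₂(b,μ₁(c)), i.e. t(b) ▷ c = −{b,t(c)} − {t(c),b}
    (∀ (b : h) (c : l), actL (t₂ b) c = - pf b (t₁ c) - pf (t₁ c) b) ∧
    -- μ₂(a,μ₂(b₁,b₂)) = μ₂(μ₂(a,b₁),b₂) + μ₂(b₁,μ₂(a,b₂))
    (∀ (a : g) (b₁ b₂ : h),
      actL a (- pf b₁ b₂ - pf b₂ b₁)
        = (- pf (actH a b₁) b₂ - pf b₂ (actH a b₁))
          + (- pf b₁ (actH a b₂) - pf (actH a b₂) b₁)) :=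
  two_crossed_module_gives_strict_three_term_Linfty_general t₁ t₂ h_tt actH actL h_actH h_actL
    h_equivL h_equivH pf h_pf_equiv h_pf₁ h_pf₅
end

section
/- Let (𝔩 → 𝔥 → 𝔤, ▷, {−,−}) be a 2-crossed module of Lie algebras. Define a bilinear map 𝔥 × 𝔩 → 𝔩 by b ▷ c := −{t(c), b}. Then (𝔩 → 𝔥, ▷) with the homomorphism t : 𝔩 → 𝔥 is a crossed module of Lie algebras: the map b ▷ − is an action of 𝔥 on 𝔩 by derivations ([b₁,b₂] ▷ c = b₁ ▷ (b₂ ▷ c) − b₂ ▷ (b₁ ▷ c) and b ▷ [c₁,c₂] = [b ▷ c₁, c₂] + [c₁, b ▷ c₂]), t(b ▷ c) = [b, t(c)], and t(c₁) ▷ c₂ = [c₁, c₂]. -/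
/-!
Write `b ▷ c := -{t c, b}`. Each crossed-module axiom is an instance of a 2-crossed-module axiom
evaluated on elements in the image of `t : 𝔩 → 𝔥`, where `t ∘ t = 0` kills the `𝔤`-action terms:
the action law is `{t c, [b₁, b₂]}` expanded by the third Peiffer axiom, equivariance and the
Peiffer identity are the first two, and the derivation law follows by expanding
`{[t c₁, t c₂], b}` with the fourth axiom and then the third.
-/

namespace TwoCrossedModule

variable {R : Type*} [CommRing R]
  {l : Type*} [LieRing l] [LieAlgebra R l]
  {h : Type*} [LieRing h] [LieAlgebra R h]
  {g : Type*} [LieRing g] [LieAlgebra R g]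

def peifferAction (t₁ : l →ₗ⁅R⁆ h) (pf : h →ₗ[R] h →ₗ[R] l) (b : h) (c : l) : l :=
  -pf (t₁ c) b

variable (t₁ : l →ₗ⁅R⁆ h) (t₂ : h →ₗ⁅R⁆ g) (pf : h →ₗ[R] h →ₗ[R] l)

theorem peifferAction_lie
    (h_pf₃ : ∀ b₁ b₂ b₃ : h,
      pf b₁ ⁅b₂, b₃⁆ = pf (t₁ (pf b₁ b₂)) b₃ - pf (t₁ (pf b₁ b₃)) b₂)
    (b₁ b₂ : h) (c : l) :
    peifferAction t₁ pf ⁅b₁, b₂⁆ c =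
      peifferAction t₁ pf b₁ (peifferAction t₁ pf b₂ c) -
        peifferAction t₁ pf b₂ (peifferAction t₁ pf b₁ c) := by
  simp only [peifferAction, map_neg, LinearMap.neg_apply, neg_neg, h_pf₃ (t₁ c) b₁ b₂]
  abel

theorem map_peifferAction (actH : g →ₗ[R] h →ₗ[R] h)
    (h_tt : ∀ c : l, t₂ (t₁ c) = 0)
    (h_pf₁ : ∀ b₁ b₂ : h, t₁ (pf b₁ b₂) = ⁅b₁, b₂⁆ - actH (t₂ b₁) b₂)
    (b : h) (c : l) :
    t₁ (peifferAction t₁ pf b c) = ⁅b, t₁ c⁆ := by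
  rw [peifferAction, map_neg, h_pf₁, h_tt, map_zero, LinearMap.zero_apply, sub_zero, lie_skew]

theorem peifferAction_map (h_pf₂ : ∀ c₁ c₂ : l, pf (t₁ c₁) (t₁ c₂) = ⁅c₁, c₂⁆) (c₁ c₂ : l) :
    peifferAction t₁ pf (t₁ c₁) c₂ = ⁅c₁, c₂⁆ := by
  rw [peifferAction, h_pf₂, lie_skew]

theorem peiffer_map_map_lie
    (h_pf₂ : ∀ c₁ c₂ : l, pf (t₁ c₁) (t₁ c₂) = ⁅c₁, c₂⁆)
    (h_pf₃ : ∀ b₁ b₂ b₃ : h,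
      pf b₁ ⁅b₂, b₃⁆ = pf (t₁ (pf b₁ b₂)) b₃ - pf (t₁ (pf b₁ b₃)) b₂)
    (c₁ c₂ : l) (b : h) :
    pf (t₁ c₁) ⁅t₁ c₂, b⁆ = pf (t₁ ⁅c₁, c₂⁆) b - ⁅pf (t₁ c₁) b, c₂⁆ := by
  rw [h_pf₃, h_pf₂, h_pf₂]

theorem peiffer_map_lie (actL : g →ₗ[R] l →ₗ[R] l)
    (h_tt : ∀ c : l, t₂ (t₁ c) = 0)
    (h_pf₂ : ∀ c₁ c₂ : l, pf (t₁ c₁) (t₁ c₂) = ⁅c₁, c₂⁆)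
    (h_pf₃ : ∀ b₁ b₂ b₃ : h,
      pf b₁ ⁅b₂, b₃⁆ = pf (t₁ (pf b₁ b₂)) b₃ - pf (t₁ (pf b₁ b₃)) b₂)
    (h_pf₄ : ∀ b₁ b₂ b₃ : h,
      pf ⁅b₁, b₂⁆ b₃ = actL (t₂ b₁) (pf b₂ b₃) + pf b₁ ⁅b₂, b₃⁆
        - actL (t₂ b₂) (pf b₁ b₃) - pf b₂ ⁅b₁, b₃⁆)
    (c₁ c₂ : l) (b : h) :
    pf (t₁ ⁅c₁, c₂⁆) b = ⁅pf (t₁ c₁) b, c₂⁆ - ⁅pf (t₁ c₂) b, c₁⁆ := by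
  have expand := h_pf₄ (t₁ c₁) (t₁ c₂) b
  rw [← t₁.map_lie, peiffer_map_map_lie t₁ pf h_pf₂ h_pf₃, peiffer_map_map_lie t₁ pf h_pf₂ h_pf₃,
    ← lie_skew c₂ c₁, map_neg, map_neg, LinearMap.neg_apply] at expand
  simp only [h_tt, map_zero, LinearMap.zero_apply, zero_add, sub_zero] at expand
  -- with `X := {t [c₁, c₂], b}`, `expand` now reads `X = (X - A) - (-X - B)`
  linear_combination (norm := module) -expand

theorem peifferAction_lie_right (actL : g →ₗ[R] l →ₗ[R] l)
    (h_tt : ∀ c : l, t₂ (t₁ c) = 0)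
    (h_pf₂ : ∀ c₁ c₂ : l, pf (t₁ c₁) (t₁ c₂) = ⁅c₁, c₂⁆)
    (h_pf₃ : ∀ b₁ b₂ b₃ : h,
      pf b₁ ⁅b₂, b₃⁆ = pf (t₁ (pf b₁ b₂)) b₃ - pf (t₁ (pf b₁ b₃)) b₂)
    (h_pf₄ : ∀ b₁ b₂ b₃ : h,
      pf ⁅b₁, b₂⁆ b₃ = actL (t₂ b₁) (pf b₂ b₃) + pf b₁ ⁅b₂, b₃⁆
        - actL (t₂ b₂) (pf b₁ b₃) - pf b₂ ⁅b₁, b₃⁆)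
    (b : h) (c₁ c₂ : l) :
    peifferAction t₁ pf b ⁅c₁, c₂⁆ =
      ⁅peifferAction t₁ pf b c₁, c₂⁆ + ⁅c₁, peifferAction t₁ pf b c₂⁆ := by
  simp only [peifferAction, peiffer_map_lie t₁ t₂ pf actL h_tt h_pf₂ h_pf₃ h_pf₄, neg_lie, lie_neg,
    ← lie_skew (pf (t₁ c₂) b) c₁]
  abel

end TwoCrossedModule

open TwoCrossedModule in
theorem two_crossed_module_truncation_is_crossed_module_general
    {l : Type*} [LieRing l] [LieAlgebra ℝ l]
    {h : Type*} [LieRing h] [LieAlgebra ℝ h]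
    {g : Type*} [LieRing g] [LieAlgebra ℝ g]
    (t₁ : l →ₗ⁅ℝ⁆ h) (t₂ : h →ₗ⁅ℝ⁆ g)
    (h_tt : ∀ c : l, t₂ (t₁ c) = 0)
    (actH : g →ₗ[ℝ] h →ₗ[ℝ] h) (actL : g →ₗ[ℝ] l →ₗ[ℝ] l)
    (pf : h →ₗ[ℝ] h →ₗ[ℝ] l)
    (h_pf₁ : ∀ b₁ b₂ : h, t₁ (pf b₁ b₂) = ⁅b₁, b₂⁆ - actH (t₂ b₁) b₂)
    (h_pf₂ : ∀ c₁ c₂ : l, pf (t₁ c₁) (t₁ c₂) = ⁅c₁, c₂⁆)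
    (h_pf₃ : ∀ b₁ b₂ b₃ : h,
      pf b₁ ⁅b₂, b₃⁆ = pf (t₁ (pf b₁ b₂)) b₃ - pf (t₁ (pf b₁ b₃)) b₂)
    (h_pf₄ : ∀ b₁ b₂ b₃ : h,
      pf ⁅b₁, b₂⁆ b₃ = actL (t₂ b₁) (pf b₂ b₃) + pf b₁ ⁅b₂, b₃⁆
        - actL (t₂ b₂) (pf b₁ b₃) - pf b₂ ⁅b₁, b₃⁆)
    -- the 𝔥-action on 𝔩:  b ▷ c := −{t(c), b}
    (act : h → l → l) (h_act : ∀ (b : h) (c : l), act b c = - pf (t₁ c) b) :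
    -- [b₁,b₂] ▷ c = b₁ ▷ (b₂ ▷ c) − b₂ ▷ (b₁ ▷ c)
    (∀ (b₁ b₂ : h) (c : l),
      act ⁅b₁, b₂⁆ c = act b₁ (act b₂ c) - act b₂ (act b₁ c)) ∧
    -- b ▷ [c₁,c₂] = [b ▷ c₁, c₂] + [c₁, b ▷ c₂]
    (∀ (b : h) (c₁ c₂ : l),
      act b ⁅c₁, c₂⁆ = ⁅act b c₁, c₂⁆ + ⁅c₁, act b c₂⁆) ∧
    -- t(b ▷ c) = [b, t(c)]
    (∀ (b : h) (c : l), t₁ (act b c) = ⁅b, t₁ c⁆) ∧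
    -- Peiffer identity: t(c₁) ▷ c₂ = [c₁, c₂]
    (∀ c₁ c₂ : l, act (t₁ c₁) c₂ = ⁅c₁, c₂⁆) := by
  obtain rfl : act = peifferAction t₁ pf := funext₂ h_act
  exact ⟨peifferAction_lie t₁ pf h_pf₃,
    peifferAction_lie_right t₁ t₂ pf actL h_tt h_pf₂ h_pf₃ h_pf₄,
    map_peifferAction t₁ t₂ pf actH h_tt h_pf₁,
    peifferAction_map t₁ pf h_pf₂⟩

/-- For a 2-crossed module of Lie algebras `(𝔩 → 𝔥 → 𝔤, ▷, {−,−})`, the map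
`b ▷ c := −{t(c), b}` makes `(𝔩 → 𝔥)` a crossed module of Lie algebras: `𝔥` acts on `𝔩` by
derivations, `t(b ▷ c) = [b, t(c)]` and the Peiffer identity `t(c₁) ▷ c₂ = [c₁, c₂]`
holds. -/
theorem two_crossed_module_truncation_is_crossed_module
    {l : Type*} [LieRing l] [LieAlgebra ℝ l]
    {h : Type*} [LieRing h] [LieAlgebra ℝ h]
    {g : Type*} [LieRing g] [LieAlgebra ℝ g]
    (t₁ : l →ₗ⁅ℝ⁆ h) (t₂ : h →ₗ⁅ℝ⁆ g)
    (h_tt : ∀ c : l, t₂ (t₁ c) = 0)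
    (actH : g →ₗ[ℝ] h →ₗ[ℝ] h) (actL : g →ₗ[ℝ] l →ₗ[ℝ] l)
    (h_actH : ∀ (a₁ a₂ : g) (b : h),
      actH ⁅a₁, a₂⁆ b = actH a₁ (actH a₂ b) - actH a₂ (actH a₁ b))
    (h_actL : ∀ (a₁ a₂ : g) (c : l),
      actL ⁅a₁, a₂⁆ c = actL a₁ (actL a₂ c) - actL a₂ (actL a₁ c))
    (h_derH : ∀ (a : g) (b₁ b₂ : h),
      actH a ⁅b₁, b₂⁆ = ⁅actH a b₁, b₂⁆ + ⁅b₁, actH a b₂⁆)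
    (h_derL : ∀ (a : g) (c₁ c₂ : l),
      actL a ⁅c₁, c₂⁆ = ⁅actL a c₁, c₂⁆ + ⁅c₁, actL a c₂⁆)
    (h_equivL : ∀ (a : g) (c : l), t₁ (actL a c) = actH a (t₁ c))
    (h_equivH : ∀ (a : g) (b : h), t₂ (actH a b) = ⁅a, t₂ b⁆)
    (pf : h →ₗ[ℝ] h →ₗ[ℝ] l)
    (h_pf_equiv : ∀ (a : g) (b₁ b₂ : h),
      actL a (pf b₁ b₂) = pf (actH a b₁) b₂ + pf b₁ (actH a b₂))
    (h_pf₁ : ∀ b₁ b₂ : h, t₁ (pf b₁ b₂) = ⁅b₁, b₂⁆ - actH (t₂ b₁) b₂)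
    (h_pf₂ : ∀ c₁ c₂ : l, pf (t₁ c₁) (t₁ c₂) = ⁅c₁, c₂⁆)
    (h_pf₃ : ∀ b₁ b₂ b₃ : h,
      pf b₁ ⁅b₂, b₃⁆ = pf (t₁ (pf b₁ b₂)) b₃ - pf (t₁ (pf b₁ b₃)) b₂)
    (h_pf₄ : ∀ b₁ b₂ b₃ : h,
      pf ⁅b₁, b₂⁆ b₃ = actL (t₂ b₁) (pf b₂ b₃) + pf b₁ ⁅b₂, b₃⁆
        - actL (t₂ b₂) (pf b₁ b₃) - pf b₂ ⁅b₁, b₃⁆)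
    (h_pf₅ : ∀ (b : h) (c : l), - actL (t₂ b) c = pf (t₁ c) b + pf b (t₁ c))
    -- the 𝔥-action on 𝔩:  b ▷ c := −{t(c), b}
    (act : h → l → l) (h_act : ∀ (b : h) (c : l), act b c = - pf (t₁ c) b) :
    -- [b₁,b₂] ▷ c = b₁ ▷ (b₂ ▷ c) − b₂ ▷ (b₁ ▷ c)
    (∀ (b₁ b₂ : h) (c : l),
      act ⁅b₁, b₂⁆ c = act b₁ (act b₂ c) - act b₂ (act b₁ c)) ∧
    -- b ▷ [c₁,c₂] = [b ▷ c₁, c₂] + [c₁, b ▷ c₂]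
    (∀ (b : h) (c₁ c₂ : l),
      act b ⁅c₁, c₂⁆ = ⁅act b c₁, c₂⁆ + ⁅c₁, act b c₂⁆) ∧
    -- t(b ▷ c) = [b, t(c)]
    (∀ (b : h) (c : l), t₁ (act b c) = ⁅b, t₁ c⁆) ∧
    -- Peiffer identity: t(c₁) ▷ c₂ = [c₁, c₂]
    (∀ c₁ c₂ : l, act (t₁ c₁) c₂ = ⁅c₁, c₂⁆) :=
  two_crossed_module_truncation_is_crossed_module_general t₁ t₂ h_tt actH actL pf h_pf₁ h_pf₂ h_pf₃
    h_pf₄ act h_act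
end

section
/- Let (𝔩 → 𝔥 → 𝔤, ▷, {−,−}) be a 2-crossed module of Lie algebras. Then the image t(𝔩) ⊆ 𝔥 is a Lie ideal of 𝔥 which is stable under the 𝔤-action (indeed [b, t(c)] = −t({t(c), b}) ∈ t(𝔩) for all b ∈ 𝔥, c ∈ 𝔩). Consequently the quotient 𝔥 / t(𝔩) is a Lie algebra carrying an induced 𝔤-action by derivations, the map t : 𝔥 → 𝔤 descends to a Lie algebra homomorphism t̄ : 𝔥/t(𝔩) → 𝔤, and (𝔥/t(𝔩) → 𝔤, induced action) is a crossed module of Lie algebras; in particular the Peiffer identity t̄(b̄₁) ▷ b̄₂ = [b̄₁, b̄₂] holds in the quotient. -/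
/-- For a 2-crossed module of Lie algebras `(𝔩 → 𝔥 → 𝔤, ▷, {−,−})`, the image
`t(𝔩) ⊆ 𝔥` is a Lie ideal stable under the `𝔤`-action (indeed `[b, t(c)] = −t({t(c), b})`),
the quotient `𝔥 / t(𝔩)` carries an induced `𝔤`-action by derivations, `t : 𝔥 → 𝔤` descends
to the quotient, and the Peiffer identity `t̄(b̄₁) ▷ b̄₂ = [b̄₁, b̄₂]` holds there, so that
`(𝔥/t(𝔩) → 𝔤)` is a crossed module of Lie algebras. -/
theorem two_crossed_module_quotient_is_crossed_module
    {l : Type*} [LieRing l] [LieAlgebra ℝ l]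
    {h : Type*} [LieRing h] [LieAlgebra ℝ h]
    {g : Type*} [LieRing g] [LieAlgebra ℝ g]
    (t₁ : l →ₗ⁅ℝ⁆ h) (t₂ : h →ₗ⁅ℝ⁆ g)
    (h_tt : ∀ c : l, t₂ (t₁ c) = 0)
    (actH : g →ₗ[ℝ] h →ₗ[ℝ] h) (actL : g →ₗ[ℝ] l →ₗ[ℝ] l)
    (h_actH : ∀ (a₁ a₂ : g) (b : h),
      actH ⁅a₁, a₂⁆ b = actH a₁ (actH a₂ b) - actH a₂ (actH a₁ b))
    (h_actL : ∀ (a₁ a₂ : g) (c : l),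
      actL ⁅a₁, a₂⁆ c = actL a₁ (actL a₂ c) - actL a₂ (actL a₁ c))
    (h_derH : ∀ (a : g) (b₁ b₂ : h),
      actH a ⁅b₁, b₂⁆ = ⁅actH a b₁, b₂⁆ + ⁅b₁, actH a b₂⁆)
    (h_derL : ∀ (a : g) (c₁ c₂ : l),
      actL a ⁅c₁, c₂⁆ = ⁅actL a c₁, c₂⁆ + ⁅c₁, actL a c₂⁆)
    (h_equivL : ∀ (a : g) (c : l), t₁ (actL a c) = actH a (t₁ c))
    (h_equivH : ∀ (a : g) (b : h), t₂ (actH a b) = ⁅a, t₂ b⁆)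
    (pf : h →ₗ[ℝ] h →ₗ[ℝ] l)
    (h_pf_equiv : ∀ (a : g) (b₁ b₂ : h),
      actL a (pf b₁ b₂) = pf (actH a b₁) b₂ + pf b₁ (actH a b₂))
    (h_pf₁ : ∀ b₁ b₂ : h, t₁ (pf b₁ b₂) = ⁅b₁, b₂⁆ - actH (t₂ b₁) b₂)
    (h_pf₂ : ∀ c₁ c₂ : l, pf (t₁ c₁) (t₁ c₂) = ⁅c₁, c₂⁆)
    (h_pf₃ : ∀ b₁ b₂ b₃ : h,
      pf b₁ ⁅b₂, b₃⁆ = pf (t₁ (pf b₁ b₂)) b₃ - pf (t₁ (pf b₁ b₃)) b₂)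
    (h_pf₄ : ∀ b₁ b₂ b₃ : h,
      pf ⁅b₁, b₂⁆ b₃ = actL (t₂ b₁) (pf b₂ b₃) + pf b₁ ⁅b₂, b₃⁆
        - actL (t₂ b₂) (pf b₁ b₃) - pf b₂ ⁅b₁, b₃⁆)
    (h_pf₅ : ∀ (b : h) (c : l), - actL (t₂ b) c = pf (t₁ c) b + pf b (t₁ c)) :
    -- the explicit formula showing t(𝔩) is an ideal of 𝔥
    (∀ (b : h) (c : l), ⁅b, t₁ c⁆ = - t₁ (pf (t₁ c) b)) ∧
    -- t(𝔩) is stable under the 𝔤-action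
    (∀ (a : g) (c : l), ∃ c' : l, actH a (t₁ c) = t₁ c') ∧
    -- there is a Lie ideal of 𝔥 whose underlying set is the image t(𝔩), and the
    -- corresponding quotient Lie algebra 𝔥 / t(𝔩) is a crossed module over 𝔤:
    ∃ I : LieIdeal ℝ h, (I : Set h) = Set.range t₁ ∧
      -- the 𝔤-action descends to the quotient
      (∀ (a : g) (b b' : h), LieSubmodule.Quotient.mk' I b = LieSubmodule.Quotient.mk' I b' →
        LieSubmodule.Quotient.mk' I (actH a b) = LieSubmodule.Quotient.mk' I (actH a b')) ∧
      -- the descended action acts by derivations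
      (∀ (a : g) (b₁ b₂ : h),
        LieSubmodule.Quotient.mk' I (actH a ⁅b₁, b₂⁆)
          = ⁅LieSubmodule.Quotient.mk' I (actH a b₁), LieSubmodule.Quotient.mk' I b₂⁆
            + ⁅LieSubmodule.Quotient.mk' I b₁, LieSubmodule.Quotient.mk' I (actH a b₂)⁆) ∧
      -- t : 𝔥 → 𝔤 descends to a Lie algebra homomorphism t̄ on the quotient
      (∀ b b' : h, LieSubmodule.Quotient.mk' I b = LieSubmodule.Quotient.mk' I b' →
        t₂ b = t₂ b') ∧
      -- the Peiffer identity holds in the quotient:  t̄(b̄₁) ▷ b̄₂ = [b̄₁, b̄₂]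
      (∀ b₁ b₂ : h,
        LieSubmodule.Quotient.mk' I (actH (t₂ b₁) b₂)
          = LieSubmodule.Quotient.mk' I ⁅b₁, b₂⁆) := by
  have key : ∀ (b : h) (c : l), ⁅b, t₁ c⁆ = - t₁ (pf (t₁ c) b) := by
    intro b c
    rw [h_pf₁, h_tt, map_zero, LinearMap.zero_apply, sub_zero, ← lie_skew]
  refine ⟨key, fun a c => ⟨actL a c, (h_equivL a c).symm⟩, ?_⟩
  let I : LieIdeal ℝ h :=
    { toSubmodule := LinearMap.range (t₁ : l →ₗ[ℝ] h)
      lie_mem := by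
        rintro x _ ⟨c, rfl⟩
        exact ⟨-(pf (t₁ c) x), by simp [key]⟩ }
  have hmem : ∀ x : h, x ∈ I ↔ ∃ c, t₁ c = x := fun x => Iff.rfl
  have hdiff : ∀ b b' : h, LieSubmodule.Quotient.mk' I b = LieSubmodule.Quotient.mk' I b' ↔
      b - b' ∈ I := by
    intro b b'
    rw [← sub_eq_zero, ← map_sub (LieSubmodule.Quotient.mk' I), LieSubmodule.Quotient.mk_eq_zero]
  refine ⟨I, ?_, ?_, ?_, ?_, ?_⟩
  · ext x; exact (hmem x).trans ⟨fun ⟨c, hc⟩ => ⟨c, hc⟩, fun ⟨c, hc⟩ => ⟨c, hc⟩⟩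
  · intro a b b' hbb
    rw [hdiff] at hbb ⊢
    obtain ⟨c, hc⟩ := hbb
    refine ⟨actL a c, ?_⟩
    show t₁ (actL a c) = _
    rw [h_equivL, show t₁ c = b - b' from hc, map_sub]
  · intro a b₁ b₂
    rw [h_derH, map_add (LieSubmodule.Quotient.mk' I)]
    rfl
  · intro b b' hbb
    rw [hdiff] at hbb
    obtain ⟨c, hc⟩ := hbb
    simp only [LieHom.coe_toLinearMap] at hc
    have := congrArg t₂ hc
    rw [h_tt, map_sub t₂] at this
    exact sub_eq_zero.mp this.symm
  · intro b₁ b₂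
    rw [hdiff]
    refine ⟨-(pf b₁ b₂), ?_⟩
    simp only [LieHom.coe_toLinearMap, map_neg]
    rw [h_pf₁]; abel
end

section
/- Let (𝔥 → 𝔤, ▷̃) be a crossed module of Lie algebras with structure map t̃. On 𝔥 × 𝔤 define the semidirect-product bracket [(b₁,a₁),(b₂,a₂)] := ([b₁,b₂] + a₁ ▷̃ b₂ − a₂ ▷̃ b₁, [a₁,a₂]); this makes 𝔥 ⋊ 𝔤 a Lie algebra. Define t : 𝔥 → 𝔥 ⋊ 𝔤 by t(b) := (−b, t̃(b)); t : 𝔥 ⋊ 𝔤 → 𝔤 by t(b,a) := t̃(b) + a; 𝔤-actions a ▷ b := a ▷̃ b on 𝔥 and a₁ ▷ (b,a₂) := (a₁ ▷̃ b, [a₁,a₂]) on 𝔥 ⋊ 𝔤; and the Peiffer lifting {(b₁,a₁),(b₂,a₂)} := a₂ ▷̃ b₁. Then this data (𝔥 → 𝔥 ⋊ 𝔤 → 𝔤, ▷, {−,−}) satisfies all the axioms of a 2-crossed module of Lie algebras (the inner derivation 2-crossed module 𝔦𝔫𝔫(𝔥 → 𝔤)). -/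
/-!
Each axiom is a componentwise identity in `𝔥 × 𝔤` which, once the formulas are unfolded,
follows from the crossed-module laws alone: the Peiffer identity turns `t̃(b₁) ▷̃ b₂` into
`[b₁, b₂]`, equivariance moves `t̃` past the action, and `▷̃` being a Lie action by derivations
gives the Jacobi identity of `𝔥 ⋊ 𝔤` and the Peiffer-lifting identities.
-/

namespace InnerDerivation

variable {R h g : Type*} [CommRing R] [LieRing h] [LieAlgebra R h] [LieRing g] [LieAlgebra R g]

def semidirectBracket (act : g →ₗ[R] h →ₗ[R] h) (p q : h × g) : h × g :=
  (⁅p.1, q.1⁆ + act p.2 q.1 - act q.2 p.1, ⁅p.2, q.2⁆)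

-- `L` and `M` refer to the bottom and middle terms `𝔩 = 𝔥` and `𝔪 = 𝔥 ⋊ 𝔤` of the complex.
def boundaryL (t : h →ₗ⁅R⁆ g) (b : h) : h × g := (-b, t b)

def boundaryM (t : h →ₗ⁅R⁆ g) (p : h × g) : g := t p.1 + p.2

def actionM (act : g →ₗ[R] h →ₗ[R] h) (a : g) (p : h × g) : h × g := (act a p.1, ⁅a, p.2⁆)

def peifferLifting (act : g →ₗ[R] h →ₗ[R] h) (p q : h × g) : h := act q.2 p.1

variable {t : h →ₗ⁅R⁆ g} {act : g →ₗ[R] h →ₗ[R] h}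

theorem semidirectBracket_skew (p q : h × g) :
    semidirectBracket act p q = -semidirectBracket act q p := by
  ext
  · simp only [semidirectBracket, Prod.fst_neg, ← lie_skew q.1 p.1]; abel
  · exact (lie_skew _ _).symm

theorem semidirectBracket_jacobi
    (h_act : ∀ a₁ a₂ b, act ⁅a₁, a₂⁆ b = act a₁ (act a₂ b) - act a₂ (act a₁ b))
    (h_der : ∀ a (b₁ b₂ : h), act a ⁅b₁, b₂⁆ = ⁅act a b₁, b₂⁆ + ⁅b₁, act a b₂⁆)
    (p q r : h × g) :
    semidirectBracket act p (semidirectBracket act q r)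
      + semidirectBracket act q (semidirectBracket act r p)
      + semidirectBracket act r (semidirectBracket act p q) = 0 := by
  have jacobi_h : ⁅p.1, ⁅q.1, r.1⁆⁆ = -(⁅q.1, ⁅r.1, p.1⁆⁆ + ⁅r.1, ⁅p.1, q.1⁆⁆) := by
    rw [eq_neg_iff_add_eq_zero, ← add_assoc]; exact lie_jacobi _ _ _
  ext
  · simp only [semidirectBracket, Prod.fst_add, Prod.fst_zero, lie_add, lie_sub, map_add,
      map_sub, h_der, h_act]
    rw [← lie_skew (act p.2 q.1) r.1, ← lie_skew (act q.2 r.1) p.1,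
      ← lie_skew (act r.2 p.1) q.1, jacobi_h]
    abel
  · exact lie_jacobi _ _ _

theorem boundaryL_lie (h_peiffer : ∀ b₁ b₂ : h, act (t b₁) b₂ = ⁅b₁, b₂⁆) (b₁ b₂ : h) :
    boundaryL t ⁅b₁, b₂⁆ = semidirectBracket act (boundaryL t b₁) (boundaryL t b₂) := by
  ext
  · simp only [boundaryL, semidirectBracket, neg_lie, lie_neg, neg_neg, h_peiffer,
      ← lie_skew b₂ b₁]
    abel
  · exact t.map_lie b₁ b₂

theorem boundaryM_semidirectBracket (h_equiv : ∀ a b, t (act a b) = ⁅a, t b⁆) (p q : h × g) :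
    boundaryM t (semidirectBracket act p q) = ⁅boundaryM t p, boundaryM t q⁆ := by
  simp only [boundaryM, semidirectBracket, map_add, map_sub, LieHom.map_lie, h_equiv, lie_add,
    add_lie, ← lie_skew (t p.1) q.2]
  abel

theorem boundaryM_boundaryL (b : h) : boundaryM t (boundaryL t b) = 0 := by
  simp [boundaryM, boundaryL]

theorem actionM_lie
    (h_act : ∀ a₁ a₂ b, act ⁅a₁, a₂⁆ b = act a₁ (act a₂ b) - act a₂ (act a₁ b))
    (a₁ a₂ : g) (p : h × g) :
    actionM act ⁅a₁, a₂⁆ p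
      = actionM act a₁ (actionM act a₂ p) - actionM act a₂ (actionM act a₁ p) := by
  ext
  · exact h_act a₁ a₂ p.1
  · simp only [actionM, Prod.snd_sub, lie_lie]

theorem actionM_semidirectBracket
    (h_act : ∀ a₁ a₂ b, act ⁅a₁, a₂⁆ b = act a₁ (act a₂ b) - act a₂ (act a₁ b))
    (h_der : ∀ a (b₁ b₂ : h), act a ⁅b₁, b₂⁆ = ⁅act a b₁, b₂⁆ + ⁅b₁, act a b₂⁆)
    (a : g) (p q : h × g) :
    actionM act a (semidirectBracket act p q)
      = semidirectBracket act (actionM act a p) q + semidirectBracket act p (actionM act a q) := by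
  ext
  · simp only [actionM, semidirectBracket, Prod.fst_add, map_add, map_sub, h_der, h_act]
    abel
  · exact leibniz_lie a p.2 q.2

theorem boundaryL_act (h_equiv : ∀ a b, t (act a b) = ⁅a, t b⁆) (a : g) (b : h) :
    boundaryL t (act a b) = actionM act a (boundaryL t b) := by
  simp [boundaryL, actionM, h_equiv]

theorem boundaryM_actionM (h_equiv : ∀ a b, t (act a b) = ⁅a, t b⁆) (a : g) (p : h × g) :
    boundaryM t (actionM act a p) = ⁅a, boundaryM t p⁆ := by
  simp [boundaryM, actionM, h_equiv]

theorem act_peifferLifting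
    (h_act : ∀ a₁ a₂ b, act ⁅a₁, a₂⁆ b = act a₁ (act a₂ b) - act a₂ (act a₁ b))
    (a : g) (p q : h × g) :
    act a (peifferLifting act p q)
      = peifferLifting act (actionM act a p) q + peifferLifting act p (actionM act a q) := by
  simp [peifferLifting, actionM, h_act]

theorem boundaryL_peifferLifting (h_equiv : ∀ a b, t (act a b) = ⁅a, t b⁆)
    (h_peiffer : ∀ b₁ b₂ : h, act (t b₁) b₂ = ⁅b₁, b₂⁆) (p q : h × g) :
    boundaryL t (peifferLifting act p q)
      = semidirectBracket act p q - actionM act (boundaryM t p) q := by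
  ext
  · simp only [boundaryL, peifferLifting, semidirectBracket, actionM, boundaryM, Prod.fst_sub,
      map_add, LinearMap.add_apply, h_peiffer]
    abel
  · simp only [boundaryL, peifferLifting, semidirectBracket, actionM, boundaryM, Prod.snd_sub,
      h_equiv, add_lie, ← lie_skew q.2 (t p.1)]
    abel

theorem peifferLifting_boundaryL_boundaryL (h_peiffer : ∀ b₁ b₂ : h, act (t b₁) b₂ = ⁅b₁, b₂⁆)
    (c₁ c₂ : h) : peifferLifting act (boundaryL t c₁) (boundaryL t c₂) = ⁅c₁, c₂⁆ := by
  simp [peifferLifting, boundaryL, h_peiffer]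

theorem peifferLifting_semidirectBracket_right
    (h_act : ∀ a₁ a₂ b, act ⁅a₁, a₂⁆ b = act a₁ (act a₂ b) - act a₂ (act a₁ b))
    (p q r : h × g) :
    peifferLifting act p (semidirectBracket act q r)
      = peifferLifting act (boundaryL t (peifferLifting act p q)) r
        - peifferLifting act (boundaryL t (peifferLifting act p r)) q := by
  simp only [peifferLifting, semidirectBracket, boundaryL, map_neg, h_act]
  abel

theorem peifferLifting_semidirectBracket_left
    (h_act : ∀ a₁ a₂ b, act ⁅a₁, a₂⁆ b = act a₁ (act a₂ b) - act a₂ (act a₁ b))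
    (h_der : ∀ a (b₁ b₂ : h), act a ⁅b₁, b₂⁆ = ⁅act a b₁, b₂⁆ + ⁅b₁, act a b₂⁆)
    (h_peiffer : ∀ b₁ b₂ : h, act (t b₁) b₂ = ⁅b₁, b₂⁆) (p q r : h × g) :
    peifferLifting act (semidirectBracket act p q) r
      = act (boundaryM t p) (peifferLifting act q r)
        + peifferLifting act p (semidirectBracket act q r)
        - act (boundaryM t q) (peifferLifting act p r)
        - peifferLifting act q (semidirectBracket act p r) := by
  simp only [peifferLifting, semidirectBracket, boundaryM, map_add, map_sub, LinearMap.add_apply,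
    h_der, h_act, h_peiffer, ← lie_skew (act r.2 p.1) q.1]
  abel

theorem neg_act_boundaryM (h_peiffer : ∀ b₁ b₂ : h, act (t b₁) b₂ = ⁅b₁, b₂⁆)
    (p : h × g) (c : h) :
    -act (boundaryM t p) c
      = peifferLifting act (boundaryL t c) p + peifferLifting act p (boundaryL t c) := by
  simp only [peifferLifting, boundaryL, boundaryM, map_add, map_neg, LinearMap.add_apply,
    h_peiffer, ← lie_skew c p.1]
  abel

end InnerDerivation

open InnerDerivation in
/-- For a crossed module of Lie algebras `(𝔥 → 𝔤, ▷̃)` with structure map `t̃`,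
the data `𝔥 → 𝔥 ⋊ 𝔤 → 𝔤` with `t(b) = (−b, t̃(b))`, `t(b,a) = t̃(b) + a`, the evident
`𝔤`-actions and Peiffer lifting `{(b₁,a₁),(b₂,a₂)} = a₂ ▷̃ b₁` is a 2-crossed module of
Lie algebras — the inner derivation 2-crossed module `𝔦𝔫𝔫(𝔥 → 𝔤)`. -/
theorem inner_derivations_form_two_crossed_module
    {h : Type*} [LieRing h] [LieAlgebra ℝ h]
    {g : Type*} [LieRing g] [LieAlgebra ℝ g]
    (t : h →ₗ⁅ℝ⁆ g) (act : g →ₗ[ℝ] h →ₗ[ℝ] h)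
    (h_act : ∀ (a₁ a₂ : g) (b : h),
      act ⁅a₁, a₂⁆ b = act a₁ (act a₂ b) - act a₂ (act a₁ b))
    (h_der : ∀ (a : g) (b₁ b₂ : h),
      act a ⁅b₁, b₂⁆ = ⁅act a b₁, b₂⁆ + ⁅b₁, act a b₂⁆)
    (h_equiv : ∀ (a : g) (b : h), t (act a b) = ⁅a, t b⁆)
    (h_peiffer : ∀ b₁ b₂ : h, act (t b₁) b₂ = ⁅b₁, b₂⁆)
    -- the semidirect-product bracket on 𝔥 ⋊ 𝔤 = 𝔥 × 𝔤
    (br : h × g → h × g → h × g)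
    (h_br : ∀ p q : h × g,
      br p q = (⁅p.1, q.1⁆ + act p.2 q.1 - act q.2 p.1, ⁅p.2, q.2⁆))
    -- the structure maps of 𝔦𝔫𝔫(𝔥 → 𝔤)
    (tL : h → h × g) (h_tL : ∀ b : h, tL b = (-b, t b))
    (tM : h × g → g) (h_tM : ∀ p : h × g, tM p = t p.1 + p.2)
    (actM : g → h × g → h × g)
    (h_actM : ∀ (a : g) (p : h × g), actM a p = (act a p.1, ⁅a, p.2⁆))
    (pf : h × g → h × g → h)
    (h_pf : ∀ p q : h × g, pf p q = act q.2 p.1) :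
    -- the semidirect-product bracket makes 𝔥 ⋊ 𝔤 a Lie algebra
    (∀ p q : h × g, br p q = - br q p) ∧
    (∀ p q r : h × g, br p (br q r) + br q (br r p) + br r (br p q) = 0) ∧
    -- t : 𝔥 → 𝔥 ⋊ 𝔤 and t : 𝔥 ⋊ 𝔤 → 𝔤 are Lie algebra homomorphisms with t ∘ t = 0
    (∀ b₁ b₂ : h, tL ⁅b₁, b₂⁆ = br (tL b₁) (tL b₂)) ∧
    (∀ p q : h × g, tM (br p q) = ⁅tM p, tM q⁆) ∧
    (∀ b : h, tM (tL b) = 0) ∧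
    -- the 𝔤-action on 𝔥 ⋊ 𝔤 is a Lie algebra action by derivations
    (∀ (a₁ a₂ : g) (p : h × g),
      actM ⁅a₁, a₂⁆ p = actM a₁ (actM a₂ p) - actM a₂ (actM a₁ p)) ∧
    (∀ (a : g) (p q : h × g),
      actM a (br p q) = br (actM a p) q + br p (actM a q)) ∧
    -- equivariance of the structure maps
    (∀ (a : g) (b : h), tL (act a b) = actM a (tL b)) ∧
    (∀ (a : g) (p : h × g), tM (actM a p) = ⁅a, tM p⁆) ∧
    -- 𝔤-equivariance of the Peiffer lifting
    (∀ (a : g) (p q : h × g),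
      act a (pf p q) = pf (actM a p) q + pf p (actM a q)) ∧
    -- the five axioms of a 2-crossed module of Lie algebras
    (∀ p q : h × g, tL (pf p q) = br p q - actM (tM p) q) ∧
    (∀ c₁ c₂ : h, pf (tL c₁) (tL c₂) = ⁅c₁, c₂⁆) ∧
    (∀ p q r : h × g, pf p (br q r) = pf (tL (pf p q)) r - pf (tL (pf p r)) q) ∧
    (∀ p q r : h × g,
      pf (br p q) r = act (tM p) (pf q r) + pf p (br q r)
        - act (tM q) (pf p r) - pf q (br p r)) ∧
    (∀ (p : h × g) (c : h), - act (tM p) c = pf (tL c) p + pf p (tL c)) := by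
  obtain rfl : br = semidirectBracket act := funext₂ h_br
  obtain rfl : tL = boundaryL t := funext h_tL
  obtain rfl : tM = boundaryM t := funext h_tM
  obtain rfl : actM = actionM act := funext₂ h_actM
  obtain rfl : pf = peifferLifting act := funext₂ h_pf
  exact ⟨semidirectBracket_skew, semidirectBracket_jacobi h_act h_der,
    boundaryL_lie h_peiffer, boundaryM_semidirectBracket h_equiv, boundaryM_boundaryL,
    actionM_lie h_act, actionM_semidirectBracket h_act h_der, boundaryL_act h_equiv,
    boundaryM_actionM h_equiv, act_peifferLifting h_act,
    boundaryL_peifferLifting h_equiv h_peiffer, peifferLifting_boundaryL_boundaryL h_peiffer,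
    peifferLifting_semidirectBracket_right h_act,
    peifferLifting_semidirectBracket_left h_act h_der h_peiffer, neg_act_boundaryM h_peiffer⟩
end

section
/- Let 𝔤 be a finite-dimensional real Lie algebra and ℓ : ℝ → ℝ a smooth function with ℓ(0) = 0 and ℓ(1) = 1. Define χ : P₀𝔤 × P₀𝔤 → P₀𝔤 by χ(γ₁,γ₂) := [γ₁,γ₂] − ℓ·[γ₁(1),γ₂(1)] (pointwise bracket; ℓ·x denotes τ ↦ ℓ(τ)x). Then: (i) χ(γ₁,γ₂) ∈ L₀𝔤 for all γ₁,γ₂ ∈ P₀𝔤; (ii) χ is antisymmetric; and (iii) for all λ₁,λ₂ ∈ L₀𝔤 and γ₁,γ₂ ∈ P₀𝔤, χ(λ₁+γ₁, λ₂+γ₂) = [λ₁,λ₂] + [λ₁,γ₂] + [γ₁,λ₂] + χ(γ₁,γ₂). (Identity (iii) is the Peiffer axiom t({x₁,x₂}) = [x₁,x₂] − t(x₁) ▷ x₂ for the adjusted inner derivation 2-crossed module 𝔦𝔫𝔫_adj(𝔤_lp), whose Peiffer lifting is {(λ₁,γ₁),(λ₂,γ₂)} = χ(λ₁+γ₁,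 λ₂+γ₂) and whose action is γ₁ ▷ (λ₂,γ₂) = (−χ(γ₁,γ₂), [γ₁,γ₂]).) -/
/-- The based path space `P₀𝔤`: smooth maps `ℝ → 𝔤` vanishing at `0`. -/
def PathAlg (E : Type*) [NormedAddCommGroup E] [NormedSpace ℝ E] : Set (ℝ → E) :=
  {γ | ContDiff ℝ (⊤ : ℕ∞) γ ∧ γ 0 = 0}

/-- The based loop space `L₀𝔤`: based paths also vanishing at `1`. -/
def LoopAlg (E : Type*) [NormedAddCommGroup E] [NormedSpace ℝ E] : Set (ℝ → E) :=
  {γ | γ ∈ PathAlg E ∧ γ 1 = 0}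

/-- The adjustment datum `χ(γ₁,γ₂) = [γ₁,γ₂] − ℓ·[γ₁(1),γ₂(1)]`. -/
def chiMap {E : Type*} [NormedAddCommGroup E] [NormedSpace ℝ E]
    (br : E →ₗ[ℝ] E →ₗ[ℝ] E) (ℓ : ℝ → ℝ) (γ₁ γ₂ : ℝ → E) : ℝ → E :=
  fun τ => br (γ₁ τ) (γ₂ τ) - ℓ τ • br (γ₁ 1) (γ₂ 1)

/-- For a finite-dimensional real Lie algebra `𝔤` (encoded as a
finite-dimensional normed space `E` with a bilinear Lie bracket `br`) and smooth
`ℓ : ℝ → ℝ` with `ℓ(0) = 0`, `ℓ(1) = 1`, the map `χ(γ₁,γ₂) := [γ₁,γ₂] − ℓ·[γ₁(1),γ₂(1)]`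
(i) takes values in `L₀𝔤`, (ii) is antisymmetric, and (iii) satisfies
`χ(λ₁+γ₁, λ₂+γ₂) = [λ₁,λ₂] + [λ₁,γ₂] + [γ₁,λ₂] + χ(γ₁,γ₂)` for loops `λᵢ` and paths `γᵢ`,
which is the Peiffer axiom for the adjusted inner derivation 2-crossed module
`𝔦𝔫𝔫_adj(𝔤_lp)`. -/
theorem adjusted_peiffer_lifting_loop_model
    {E : Type*} [NormedAddCommGroup E] [NormedSpace ℝ E] [FiniteDimensional ℝ E]
    (br : E →ₗ[ℝ] E →ₗ[ℝ] E)
    (h_anti : ∀ x y : E, br x y = - br y x)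
    (h_jacobi : ∀ x y z : E,
      br x (br y z) + br y (br z x) + br z (br x y) = 0)
    (ℓ : ℝ → ℝ) (hℓ : ContDiff ℝ (⊤ : ℕ∞) ℓ) (hℓ0 : ℓ 0 = 0) (hℓ1 : ℓ 1 = 1) :
    -- (i) χ takes values in L₀𝔤
    (∀ γ₁ ∈ PathAlg E, ∀ γ₂ ∈ PathAlg E, chiMap br ℓ γ₁ γ₂ ∈ LoopAlg E) ∧
    -- (ii) χ is antisymmetric
    (∀ γ₁ γ₂ : ℝ → E, chiMap br ℓ γ₁ γ₂ = - chiMap br ℓ γ₂ γ₁) ∧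
    -- (iii) the Peiffer axiom:
    -- χ(λ₁+γ₁, λ₂+γ₂) = [λ₁,λ₂] + [λ₁,γ₂] + [γ₁,λ₂] + χ(γ₁,γ₂)
    (∀ l₁ ∈ LoopAlg E, ∀ l₂ ∈ LoopAlg E, ∀ γ₁ ∈ PathAlg E, ∀ γ₂ ∈ PathAlg E,
      chiMap br ℓ (l₁ + γ₁) (l₂ + γ₂)
        = (fun τ => br (l₁ τ) (l₂ τ) + br (l₁ τ) (γ₂ τ) + br (γ₁ τ) (l₂ τ))
          + chiMap br ℓ γ₁ γ₂) := by
  classical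
  -- continuous bilinear version of the bracket
  let B1 : E →ₗ[ℝ] (E →L[ℝ] E) :=
    { toFun := fun x => LinearMap.toContinuousLinearMap (br x)
      map_add' := by intro x y; ext z; simp
      map_smul' := by intro c x; ext z; simp }
  let B : E →L[ℝ] (E →L[ℝ] E) := LinearMap.toContinuousLinearMap B1
  have hB : ∀ x y : E, B x y = br x y := fun x y => rfl
  have hsm : ∀ {f g : ℝ → E}, ContDiff ℝ (⊤ : ℕ∞) f → ContDiff ℝ (⊤ : ℕ∞) g →
      ContDiff ℝ (⊤ : ℕ∞) (fun τ => br (f τ) (g τ)) := by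
    intro f g hf hg
    exact (B.contDiff.comp hf).clm_apply hg
  refine ⟨?_, ?_, ?_⟩
  · rintro γ₁ ⟨h1, h10⟩ γ₂ ⟨h2, h20⟩
    refine ⟨⟨?_, ?_⟩, ?_⟩
    · exact (hsm h1 h2).sub (hℓ.smul contDiff_const)
    · simp [chiMap, h10, hℓ0]
    · simp [chiMap, hℓ1]
  · intro γ₁ γ₂
    funext τ
    simp only [chiMap, Pi.neg_apply]
    rw [h_anti (γ₁ τ) (γ₂ τ), h_anti (γ₁ 1) (γ₂ 1)]
    simp only [smul_neg]
    abel
  · rintro l₁ ⟨⟨_, _⟩, h11⟩ l₂ ⟨⟨_, _⟩, h21⟩ γ₁ ⟨_, _⟩ γ₂ ⟨_, _⟩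
    funext τ
    simp only [chiMap, Pi.add_apply, map_add, LinearMap.add_apply, h11, h21, map_zero,
      LinearMap.zero_apply, zero_add, add_zero]
    abel
end

section
/- Let (H → G, ▷̃) be a crossed module of groups with structure map t̃. Define L := H, M := H ⋊ G (with multiplication (h₁,g₁)(h₂,g₂) = (h₁ (g₁ ▷̃ h₂), g₁g₂)), maps t : L → M, h ↦ (h⁻¹, t̃(h)), and t : M → G, (h,g) ↦ t̃(h)g; G-actions g ▷ (h,g') := (g ▷̃ h, g g' g⁻¹) on M and g ▷ h := g ▷̃ h on L; and the Peiffer lifting {(h₁,g₁),(h₂,g₂)} := ((g₁g₂g₁⁻¹) ▷̃ h₁) · h₁⁻¹. Then this data is a 2-crossed module of groups: t ∘ t is trivial, both maps t are G-equivariant group homomorphisms, the G-actions are by automorphisms, the Peiffer lifting is G-equivariant, and the axioms hold: t({m₁,m₂}) = m₁m₂m₁⁻¹ (t(m₁) ▷ m₂⁻¹); {t(ℓ₁),t(ℓ₂)} = ℓ₁ℓ₂ℓ₁⁻¹ℓ₂⁻¹; {m₁m₂,m₃} = {m₁, m₂m₃m₂⁻¹} (t(m₁) ▷ {m₂,m₃});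 {m₁,m₂m₃} = {m₁,m₂}{m₁,m₃}{t({m₁,m₃})⁻¹, t(m₁) ▷ m₂}; and ℓ (t(m) ▷ ℓ⁻¹) = {t(ℓ),m}{m,t(ℓ)} for all m,mᵢ ∈ M and ℓ,ℓᵢ ∈ L. -/
/-!
The action of `G` on `H ⋊ G` is conjugation by the copy of `G` inside `H ⋊ G`, hence an action
by automorphisms. Every other identity is checked componentwise in `H ⋊ G`, where the two
crossed-module axioms — `φ (t h)` is conjugation by `h`, and `t` intertwines `φ g` with
conjugation by `g` — turn it into an identity between words in a group.
-/

section

open SemidirectProduct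
open scoped commutatorElement

variable {H G : Type*} [Group H] [Group G]

structure IsCrossedModule (t : H →* G) (φ : G →* MulAut H) : Prop where
  boundary_act : ∀ g h, t (φ g h) = g * t h * g⁻¹
  act_boundary : ∀ h₁ h₂, φ (t h₁) h₂ = h₁ * h₂ * h₁⁻¹

def innerAction (φ : G →* MulAut H) : G →* MulAut (H ⋊[φ] G) :=
  MulAut.conj.comp inr

@[simp]
theorem left_innerAction (φ : G →* MulAut H) (g : G) (m : H ⋊[φ] G) :
    (innerAction φ g m).left = φ g m.left := by
  simp [innerAction]

@[simp]
theorem right_innerAction (φ : G →* MulAut H) (g : G) (m : H ⋊[φ] G) :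
    (innerAction φ g m).right = g * m.right * g⁻¹ := by
  simp [innerAction]

def peifferLift (φ : G →* MulAut H) (m₁ m₂ : H ⋊[φ] G) : H :=
  φ (m₁.right * m₂.right * m₁.right⁻¹) m₁.left * m₁.left⁻¹

theorem peifferLift_innerAction (φ : G →* MulAut H) (g : G) (m₁ m₂ : H ⋊[φ] G) :
    φ g (peifferLift φ m₁ m₂) =
      peifferLift φ (innerAction φ g m₁) (innerAction φ g m₂) := by
  have hconj (k : G) (h : H) : φ (g * k * g⁻¹) (φ g h) = φ g (φ k h) := by
    simp only [map_mul, map_inv, MulAut.mul_apply, MulAut.inv_apply,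
      MulEquiv.symm_apply_apply]
  have hright : g * m₁.right * g⁻¹ * (g * m₂.right * g⁻¹) * (g * m₁.right * g⁻¹)⁻¹ =
      g * (m₁.right * m₂.right * m₁.right⁻¹) * g⁻¹ := by
    group
  simp only [peifferLift, left_innerAction, right_innerAction, hright, hconj, map_mul (φ g),
    map_inv (φ g)]

namespace IsCrossedModule

variable {t : H →* G} {φ : G →* MulAut H}

theorem act_boundary_eq_conj (hc : IsCrossedModule t φ) (h : H) : φ (t h) = MulAut.conj h :=
  MulEquiv.ext (hc.act_boundary h)

theorem boundary_act_symm (hc : IsCrossedModule t φ) (g : G) (h : H) :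
    t ((φ g).symm h) = g⁻¹ * t h * g := by
  simpa [← MulAut.inv_apply, ← map_inv] using hc.boundary_act g⁻¹ h

variable (hc : IsCrossedModule t φ)

def boundaryL : H →* H ⋊[φ] G :=
  MonoidHom.mk' (fun h ↦ ⟨h⁻¹, t h⟩) fun h₁ h₂ ↦ by
    ext <;> simp [hc.act_boundary, mul_assoc]

def boundaryM : H ⋊[φ] G →* G :=
  lift t (MonoidHom.id G) fun g ↦ MonoidHom.ext (hc.boundary_act g)

@[simp]
theorem left_boundaryL (h : H) : (hc.boundaryL h).left = h⁻¹ := rfl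

@[simp]
theorem right_boundaryL (h : H) : (hc.boundaryL h).right = t h := rfl

@[simp]
theorem boundaryM_apply (m : H ⋊[φ] G) : hc.boundaryM m = t m.left * m.right := rfl

theorem boundaryM_boundaryL (h : H) : hc.boundaryM (hc.boundaryL h) = 1 := by
  simp

theorem boundaryL_act (g : G) (h : H) :
    hc.boundaryL (φ g h) = innerAction φ g (hc.boundaryL h) := by
  ext <;> simp [hc.boundary_act]

theorem boundaryM_innerAction (g : G) (m : H ⋊[φ] G) :
    hc.boundaryM (innerAction φ g m) = g * hc.boundaryM m * g⁻¹ := by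
  simp [hc.boundary_act, mul_assoc]

theorem boundaryL_peifferLift (m₁ m₂ : H ⋊[φ] G) :
    hc.boundaryL (peifferLift φ m₁ m₂) =
      m₁ * m₂ * m₁⁻¹ * innerAction φ (hc.boundaryM m₁) m₂⁻¹ := by
  ext <;> simp [peifferLift, hc.boundary_act, hc.boundary_act_symm, hc.act_boundary_eq_conj,
    mul_assoc]

theorem peifferLift_boundaryL (l₁ l₂ : H) :
    peifferLift φ (hc.boundaryL l₁) (hc.boundaryL l₂) = ⁅l₁, l₂⁆ := by
  simp [peifferLift, commutatorElement_def, hc.act_boundary_eq_conj, mul_assoc]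

theorem peifferLift_mul_left (m₁ m₂ m₃ : H ⋊[φ] G) :
    peifferLift φ (m₁ * m₂) m₃ =
      peifferLift φ m₁ (m₂ * m₃ * m₂⁻¹) * φ (hc.boundaryM m₁) (peifferLift φ m₂ m₃) := by
  simp [peifferLift, hc.act_boundary_eq_conj, mul_assoc]

theorem peifferLift_mul_right (m₁ m₂ m₃ : H ⋊[φ] G) :
    peifferLift φ m₁ (m₂ * m₃) =
      peifferLift φ m₁ m₂ * peifferLift φ m₁ m₃ *
        peifferLift φ (hc.boundaryL (peifferLift φ m₁ m₃))⁻¹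
          (innerAction φ (hc.boundaryM m₁) m₂) := by
  simp [peifferLift, hc.boundary_act, hc.act_boundary_eq_conj, mul_assoc]

theorem mul_act_inv_eq_peifferLift (l : H) (m : H ⋊[φ] G) :
    l * φ (hc.boundaryM m) l⁻¹ =
      peifferLift φ (hc.boundaryL l) m * peifferLift φ m (hc.boundaryL l) := by
  simp [peifferLift, hc.act_boundary_eq_conj, mul_assoc]

end IsCrossedModule

end

/-- For a crossed module of groups `(H → G, ▷̃)` with structure map `t̃`, the
data `L := H`, `M := H ⋊ G`, `t(h) := (h⁻¹, t̃(h))`, `t(h,g) := t̃(h)g`, the `G`-actions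
`g ▷ (h,g') := (g ▷̃ h, g g' g⁻¹)` and `g ▷ h := g ▷̃ h`, and Peiffer lifting
`{(h₁,g₁),(h₂,g₂)} := ((g₁g₂g₁⁻¹) ▷̃ h₁) · h₁⁻¹` form a 2-crossed module of groups. -/
theorem inner_automorphisms_form_two_crossed_module_of_groups
    {H G : Type*} [Group H] [Group G]
    (t : H →* G) (φ : G →* MulAut H)
    (h_equiv : ∀ (g : G) (h : H), t (φ g h) = g * t h * g⁻¹)
    (h_peiffer : ∀ h₁ h₂ : H, φ (t h₁) h₂ = h₁ * h₂ * h₁⁻¹)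
    -- structure maps of the inner automorphism 2-crossed module
    (tL : H → H ⋊[φ] G) (h_tL : ∀ h : H, tL h = ⟨h⁻¹, t h⟩)
    (tM : H ⋊[φ] G → G) (h_tM : ∀ m : H ⋊[φ] G, tM m = t m.left * m.right)
    (actM : G → H ⋊[φ] G → H ⋊[φ] G)
    (h_actM : ∀ (g : G) (m : H ⋊[φ] G),
      actM g m = ⟨φ g m.left, g * m.right * g⁻¹⟩)
    (pf : H ⋊[φ] G → H ⋊[φ] G → H)
    (h_pf : ∀ m₁ m₂ : H ⋊[φ] G,
      pf m₁ m₂ = φ (m₁.right * m₂.right * m₁.right⁻¹) m₁.left * m₁.left⁻¹) :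
    -- t ∘ t is trivial
    (∀ h : H, tM (tL h) = 1) ∧
    -- both maps t are group homomorphisms
    (∀ h₁ h₂ : H, tL (h₁ * h₂) = tL h₁ * tL h₂) ∧
    (∀ m₁ m₂ : H ⋊[φ] G, tM (m₁ * m₂) = tM m₁ * tM m₂) ∧
    -- the G-action on M is an action by automorphisms
    (∀ (g : G) (m₁ m₂ : H ⋊[φ] G), actM g (m₁ * m₂) = actM g m₁ * actM g m₂) ∧
    (∀ m : H ⋊[φ] G, actM 1 m = m) ∧
    (∀ (g₁ g₂ : G) (m : H ⋊[φ] G), actM (g₁ * g₂) m = actM g₁ (actM g₂ m)) ∧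
    -- both maps t are G-equivariant
    (∀ (g : G) (h : H), tL (φ g h) = actM g (tL h)) ∧
    (∀ (g : G) (m : H ⋊[φ] G), tM (actM g m) = g * tM m * g⁻¹) ∧
    -- the Peiffer lifting is G-equivariant
    (∀ (g : G) (m₁ m₂ : H ⋊[φ] G),
      φ g (pf m₁ m₂) = pf (actM g m₁) (actM g m₂)) ∧
    -- the five axioms of a 2-crossed module of groups:
    -- t({m₁,m₂}) = m₁ m₂ m₁⁻¹ (t(m₁) ▷ m₂⁻¹)
    (∀ m₁ m₂ : H ⋊[φ] G,
      tL (pf m₁ m₂) = m₁ * m₂ * m₁⁻¹ * actM (tM m₁) m₂⁻¹) ∧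
    -- {t(ℓ₁),t(ℓ₂)} = ℓ₁ℓ₂ℓ₁⁻¹ℓ₂⁻¹
    (∀ l₁ l₂ : H, pf (tL l₁) (tL l₂) = l₁ * l₂ * l₁⁻¹ * l₂⁻¹) ∧
    -- {m₁m₂,m₃} = {m₁, m₂m₃m₂⁻¹} (t(m₁) ▷ {m₂,m₃})
    (∀ m₁ m₂ m₃ : H ⋊[φ] G,
      pf (m₁ * m₂) m₃ = pf m₁ (m₂ * m₃ * m₂⁻¹) * φ (tM m₁) (pf m₂ m₃)) ∧
    -- {m₁,m₂m₃} = {m₁,m₂}{m₁,m₃}{t({m₁,m₃})⁻¹, t(m₁) ▷ m₂}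
    (∀ m₁ m₂ m₃ : H ⋊[φ] G,
      pf m₁ (m₂ * m₃)
        = pf m₁ m₂ * pf m₁ m₃ * pf (tL (pf m₁ m₃))⁻¹ (actM (tM m₁) m₂)) ∧
    -- ℓ (t(m) ▷ ℓ⁻¹) = {t(ℓ),m}{m,t(ℓ)}
    (∀ (l : H) (m : H ⋊[φ] G),
      l * φ (tM m) l⁻¹ = pf (tL l) m * pf m (tL l)) := by
  have hc : IsCrossedModule t φ := ⟨h_equiv, h_peiffer⟩
  obtain rfl : tL = hc.boundaryL := funext h_tL
  obtain rfl : tM = hc.boundaryM := funext h_tM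
  obtain rfl : actM = fun g ↦ ⇑(innerAction φ g) :=
    funext₂ fun g m ↦ (h_actM g m).trans (SemidirectProduct.ext (by simp) (by simp))
  obtain rfl : pf = peifferLift φ := funext₂ h_pf
  exact ⟨hc.boundaryM_boundaryL, map_mul _, map_mul _, fun g ↦ map_mul _,
    DFunLike.congr_fun (map_one _), fun g₁ g₂ ↦ DFunLike.congr_fun (map_mul _ g₁ g₂),
    hc.boundaryL_act, hc.boundaryM_innerAction, peifferLift_innerAction φ,
    hc.boundaryL_peifferLift, hc.peifferLift_boundaryL, hc.peifferLift_mul_left,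
    hc.peifferLift_mul_right, hc.mul_act_inv_eq_peifferLift⟩
end
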